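/- arXiv:2406.01041 — 3 statements merged into one kernel-verified Lean document; each statement's English description precedes it below -/
import Mathlib

section
/- If the primal solution set psol(A,B) = {x} is a singleton, then the dual solution set dsol(A,B) equals Ax ∩ (−Bx). -/
open Pointwise InnerProductSpace

variable {X : Type*} [NormedAddCommGroup X] [InnerProductSpace ℝ X]

/-- A set-valued operator `A : X ⇉ X` is monotone. -/
def SVMonotone (A : X → Set X) : Prop :=
  ∀ ⦃x y u v : X⦄, u ∈ A x → v ∈ A y → 0 ≤ ⟪x - y, u - v⟫_ℝ

/-- A set-valued operator is maximally monotone. -/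
def SVMaxMonotone (A : X → Set X) : Prop :=
  SVMonotone A ∧ ∀ x u : X, (∀ y v, v ∈ A y → 0 ≤ ⟪x - y, u - v⟫_ℝ) → u ∈ A x

/-- Set-valued inverse. -/
def SVInv (A : X → Set X) : X → Set X := fun u => {x | u ∈ A x}

/-- `B^∨ = (−Id) ∘ B ∘ (−Id)`. -/
def SVVee (B : X → Set X) : X → Set X := fun x => -(B (-x))

/-- `B^{−∨} = (B⁻¹)^∨`. -/
def SVInvVee (B : X → Set X) : X → Set X := SVVee (SVInv B)

/-- Primal Attouch–Théra solutions: `zer (A + B)`. -/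
def psol (A B : X → Set X) : Set X := {x | (0 : X) ∈ A x + B x}

/-- Dual Attouch–Théra solutions: `zer (A⁻¹ + B^{−∨})`. -/
def dsol (A B : X → Set X) : Set X := {y | (0 : X) ∈ SVInv A y + SVInvVee B y}

section

variable {E : Type*} [NormedAddCommGroup E] {A B : E → Set E}

theorem mem_SVInvVee_iff {y z : E} : z ∈ SVInvVee B y ↔ -y ∈ B (-z) := Iff.rfl

theorem mem_dsol_iff {y : E} : y ∈ dsol A B ↔ ∃ x ∈ psol A B, y ∈ A x ∩ -(B x) := by
  constructor
  · rintro ⟨x, hyA, z, hz, hxz⟩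
    obtain rfl : -x = z := neg_eq_of_add_eq_zero_right hxz
    have hyB : -y ∈ B x := by simpa using mem_SVInvVee_iff.mp hz
    exact ⟨x, ⟨y, hyA, -y, hyB, add_neg_cancel y⟩, hyA, hyB⟩
  · rintro ⟨x, -, hyA, hyB⟩
    exact ⟨x, hyA, -x, mem_SVInvVee_iff.mpr (by simpa using hyB), add_neg_cancel x⟩

end

theorem dsol_eq_of_psol_singleton_general (A B : X → Set X) (x : X)
    (hx : psol A B = {x}) :
    dsol A B = A x ∩ (-(B x)) := by
  ext y
  simp [mem_dsol_iff, hx]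

/-- If `psol (A, B) = {x}` then `dsol (A, B) = Ax ∩ (−Bx)`. -/
theorem dsol_eq_of_psol_singleton (A B : X → Set X)
    (hA : SVMaxMonotone A) (hB : SVMaxMonotone B) (x : X)
    (hx : psol A B = {x}) :
    dsol A B = A x ∩ (-(B x)) :=
  dsol_eq_of_psol_singleton_general A B x hx
end

section
/- The set of cycles Z := Fix(J_A R) is closed and convex, and Z ⊆ F_1 × F_2 × ⋯ × F_m. -/
open Pointwise InnerProductSpace

variable {X : Type*} [NormedAddCommGroup X] [InnerProductSpace ℝ X]
variable {m : ℕ} [NeZero m]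

/-- `J` is the (single-valued, full-domain) resolvent `(Id + A)⁻¹` of `A`. -/
def IsResolventOf (J : X → X) (A : X → Set X) : Prop :=
  ∀ x y : X, J y = x ↔ y - x ∈ A x

/-- The cyclic composition `J_i ∘ J_{i-1} ∘ ⋯ ∘ J_1 ∘ J_m ∘ ⋯ ∘ J_{i+1}`
(indices understood cyclically in `Fin m`, `0`-based). -/
def cyclicComp (J : Fin m → X → X) (i : Fin m) : X → X :=
  fun x => (List.range m).foldl (fun y k => J (i + 1 + Fin.ofNat m k) y) x

/-- `F i` : the fixed point set of the cyclic composition ending with `J i`. -/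
def cycFix (J : Fin m → X → X) (i : Fin m) : Set X :=
  {x | cyclicComp J i x = x}

/-- `(z_1, …, z_m)` is a cycle: `z_{i} = J_i z_{i-1}` cyclically. -/
def IsCycle (J : Fin m → X → X) (z : Fin m → X) : Prop :=
  ∀ i : Fin m, z i = J i (z (i - 1))

/-- The circular right-shift operator on `X^m`. -/
def shiftR (z : Fin m → X) : Fin m → X := fun i => z (i - 1)

/-- The coordinatewise resolvent `J_A` on `X^m`. -/
def resProd (J : Fin m → X → X) (z : Fin m → X) : Fin m → X := fun i => J i (z i)

/-- The product operator `A = A_1 × ⋯ × A_m` on `X^m`. -/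
def prodOp (A : Fin m → X → Set X) : (Fin m → X) → Set (Fin m → X) :=
  fun z => {u | ∀ i, u i ∈ A i (z i)}

/-- The set of cycles `Z = Fix (J_A ∘ R)`. -/
def cycleSet (J : Fin m → X → X) : Set (Fin m → X) :=
  {z | resProd J (shiftR z) = z}


/-!
Resolvents of monotone operators are firmly nonexpansive, so `J_A ∘ R` is nonexpansive for the
`ℓ²` norm on `X^m`, in which `X^m` is again a Hilbert space. Fixed point sets of continuous maps
are closed, and those of nonexpansive maps on strictly convex spaces are convex: if `x`, `y` are
fixed and `p` is a convex combination of them, the image of `p` is no farther from `x` and `y`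
than `p` is, so equality in the triangle inequality pins it down to `p` itself. Finally, following
a cycle once around applies each resolvent in turn, so every coordinate of a cycle is a fixed
point of the corresponding cyclic composition.
-/

open Function

section Resolvent

variable {A : X → Set X} {J : X → X}

theorem IsResolventOf.norm_sq_le_inner (hA : SVMonotone A) (hJ : IsResolventOf J A) (x y : X) :
    ‖J x - J y‖ ^ 2 ≤ ⟪J x - J y, x - y⟫_ℝ := by
  have hmono := hA ((hJ (J x) x).mp rfl) ((hJ (J y) y).mp rfl)
  have hsplit : ⟪J x - J y, (x - J x) - (y - J y)⟫_ℝ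
      = ⟪J x - J y, x - y⟫_ℝ - ‖J x - J y‖ ^ 2 := by
    rw [← real_inner_self_eq_norm_sq, ← inner_sub_right]
    congr 1
    abel
  linarith

theorem IsResolventOf.lipschitzWith_one (hA : SVMonotone A) (hJ : IsResolventOf J A) :
    LipschitzWith 1 J := by
  refine LipschitzWith.of_dist_le_mul fun x y => ?_
  rw [NNReal.coe_one, one_mul, dist_eq_norm, dist_eq_norm]
  have hfirm := hJ.norm_sq_le_inner hA x y
  have hcs := real_inner_le_norm (J x - J y) (x - y)
  nlinarith [norm_nonneg (J x - J y), norm_nonneg (x - y)]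

end Resolvent

theorem convex_fixedPoints_of_lipschitzWith_one {E : Type*} [NormedAddCommGroup E]
    [NormedSpace ℝ E] [StrictConvexSpace ℝ E] {f : E → E} (hf : LipschitzWith 1 f) :
    Convex ℝ (fixedPoints f) := by
  intro x hx y hy a b ha hb hab
  obtain rfl : a = 1 - b := by linarith
  rw [← AffineMap.lineMap_apply_module]
  set p := AffineMap.lineMap x y b
  have hxp : dist x (f p) ≤ b * dist x y := calc
    dist x (f p) = dist (f x) (f p) := by rw [hx.eq]
    _ ≤ dist x p := hf.dist_le_mul_of_le le_rfl |>.trans_eq (one_mul _)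
    _ = b * dist x y := by rw [dist_left_lineMap, Real.norm_of_nonneg hb]
  have hpy : dist (f p) y ≤ (1 - b) * dist x y := calc
    dist (f p) y = dist (f p) (f y) := by rw [hy.eq]
    _ ≤ dist p y := hf.dist_le_mul_of_le le_rfl |>.trans_eq (one_mul _)
    _ = (1 - b) * dist x y := by rw [dist_lineMap_right, Real.norm_of_nonneg ha]
  have htri := dist_triangle x (f p) y
  exact eq_lineMap_of_dist_eq_mul_of_dist_eq_mul (E := E) (z := y) (by linarith) (by linarith)

theorem PiLp.lipschitzWith_one_map {ι : Type*} [Fintype ι] {β : ι → Type*}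
    [∀ i, SeminormedAddCommGroup (β i)] {f : ∀ i, β i → β i} (hf : ∀ i, LipschitzWith 1 (f i)) :
    LipschitzWith 1 fun x : PiLp 2 β => WithLp.toLp 2 fun i => f i (x i) := by
  refine LipschitzWith.of_dist_le_mul fun x y => ?_
  rw [NNReal.coe_one, one_mul, PiLp.dist_eq_of_L2, PiLp.dist_eq_of_L2]
  gcongr with i
  simpa using (hf i).dist_le_mul (x i) (y i)

theorem mem_cycleSet_iff_isCycle {α : Type*} {J : Fin m → α → α} {z : Fin m → α} :
    z ∈ cycleSet J ↔ IsCycle J z :=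
  funext_iff.trans (forall_congr' fun _ => eq_comm)

theorem isClosed_cycleSet {α : Type*} [TopologicalSpace α] [T2Space α] {J : Fin m → α → α}
    (hJ : ∀ i, Continuous (J i)) : IsClosed (cycleSet J) :=
  isClosed_fixedPoints (f := resProd J ∘ shiftR)
    (continuous_pi fun i => (hJ i).comp (continuous_apply _))

/-- On `X^m` with the `ℓ²` norm the shift `R` is a coordinate permutation, hence an isometry. -/
theorem lipschitzWith_one_resProd_shiftR {J : Fin m → X → X}
    (hJ : ∀ i, LipschitzWith 1 (J i)) :
    LipschitzWith 1 fun z : PiLp 2 (fun _ : Fin m => X) =>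
      WithLp.toLp 2 (resProd J (shiftR z.ofLp)) := by
  have h := (PiLp.lipschitzWith_one_map hJ).comp
    (LinearIsometryEquiv.piLpCongrLeft 2 ℝ X (Equiv.subRight (1 : Fin m)).symm).lipschitz
  rw [mul_one] at h
  exact h

/-- `Fin m → X` carries the sup norm, which is not strictly convex; convexity is instead read off
from the `ℓ²` copy `PiLp 2`, a Hilbert space. -/
theorem convex_cycleSet {J : Fin m → X → X} (hJ : ∀ i, LipschitzWith 1 (J i)) :
    Convex ℝ (cycleSet J) := by
  have hset : cycleSet J = (WithLp.linearEquiv 2 ℝ (Fin m → X)).symm ⁻¹'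
      fixedPoints fun z : PiLp 2 (fun _ : Fin m => X) =>
        WithLp.toLp 2 (resProd J (shiftR z.ofLp)) := by
    ext z
    simp [cycleSet, IsFixedPt]
  rw [hset]
  exact (convex_fixedPoints_of_lipschitzWith_one
    (lipschitzWith_one_resProd_shiftR hJ)).linear_preimage _

theorem IsCycle.foldl_range {α : Type*} {J : Fin m → α → α} {z : Fin m → α} (hz : IsCycle J z)
    (i : Fin m) (n : ℕ) :
    (List.range n).foldl (fun y k => J (i + 1 + Fin.ofNat m k) y) (z i) =
      z (i + Fin.ofNat m n) := by
  induction n with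
  | zero => simp
  | succ n ih =>
    have hsucc : Fin.ofNat m (n + 1) = Fin.ofNat m n + 1 := by
      ext; simp [Fin.val_add, Nat.add_mod]
    rw [List.range_succ, List.foldl_append, ih, List.foldl_cons, List.foldl_nil,
      hz (i + Fin.ofNat m (n + 1)), hsucc, ← add_assoc, add_sub_cancel_right, add_right_comm]

theorem IsCycle.mem_cycFix {α : Type*} {J : Fin m → α → α} {z : Fin m → α} (hz : IsCycle J z)
    (i : Fin m) : z i ∈ cycFix J i := by
  simpa [cycFix, cyclicComp, Fin.ofNat_self] using hz.foldl_range i m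

/-- The set of cycles `Z = Fix (J_A R)` is closed and convex, and
`Z ⊆ F_1 × F_2 × ⋯ × F_m`. -/
theorem cycleSet_closed_convex_subset
    (A : Fin m → X → Set X) (J : Fin m → X → X)
    (hA : ∀ i, SVMaxMonotone (A i)) (hJ : ∀ i, IsResolventOf (J i) (A i)) :
    IsClosed (cycleSet J) ∧ Convex ℝ (cycleSet J) ∧
    cycleSet J ⊆ {z : Fin m → X | ∀ i, z i ∈ cycFix J i} := by
  have hJ_lip : ∀ i, LipschitzWith 1 (J i) := fun i => (hJ i).lipschitzWith_one (hA i).1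
  exact ⟨isClosed_cycleSet fun i => (hJ_lip i).continuous, convex_cycleSet hJ_lip,
    fun z hz i => (mem_cycleSet_iff_isCycle.mp hz).mem_cycFix i⟩
end

section
/- Fix(J_A R) = Fix(J_{(1/2)A} ∘ ((Id + R)/2)); that is, a point x ∈ X^m satisfies x = J_A(Rx) if and only if x = J_{(1/2)A}((x + Rx)/2). -/
open Pointwise InnerProductSpace

variable {X : Type*} [NormedAddCommGroup X] [InnerProductSpace ℝ X]
variable {m : ℕ} [NeZero m]

/-! Both fixed-point equations say `R x - x ∈ A x`: the first directly, the second because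
`(x + R x)/2 - x = (R x - x)/2`, and scaling by `1/2` on both sides of `∈ (1/2) A x` cancels. -/

theorem resProd_eq_iff {Y : Type*} [NormedAddCommGroup Y] {n : ℕ} {A : Fin n → Y → Set Y}
    {J : Fin n → Y → Y} (hJ : ∀ i, IsResolventOf (J i) (A i)) (x y : Fin n → Y) :
    resProd J y = x ↔ y - x ∈ prodOp A x :=
  funext_iff.trans (forall_congr' fun i => hJ i (x i) (y i))

theorem apply_add_smul_sub_eq_iff_of_resolvent_smul {𝕜 V : Type*} [DivisionRing 𝕜]
    [AddCommGroup V] [Module 𝕜 V] {B : V → Set V} {J Jc : V → V} {c : 𝕜} (hc : c ≠ 0)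
    (hJ : ∀ x y, J y = x ↔ y - x ∈ B x) (hJc : ∀ x y, Jc y = x ↔ y - x ∈ c • B x)
    (x y : V) :
    Jc (x + c • (y - x)) = x ↔ J y = x := by
  rw [hJc, hJ, add_sub_cancel_left, Set.smul_mem_smul_set_iff₀ hc]

theorem fix_resolvent_shift_eq_fix_half_general
    (A : Fin m → X → Set X) (J : Fin m → X → X) (Jhalf : (Fin m → X) → (Fin m → X))
    (hJ : ∀ i, IsResolventOf (J i) (A i))
    (hJhalf : ∀ x y : Fin m → X,
      Jhalf y = x ↔ y - x ∈ (2 : ℝ)⁻¹ • prodOp A x) :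
    {x : Fin m → X | resProd J (shiftR x) = x} =
      {x : Fin m → X | Jhalf ((2 : ℝ)⁻¹ • (x + shiftR x)) = x} := by
  ext x
  have hmid : (2 : ℝ)⁻¹ • (x + shiftR x) = x + (2 : ℝ)⁻¹ • (shiftR x - x) := by module
  rw [Set.mem_ofPred_eq, Set.mem_ofPred_eq, hmid,
    apply_add_smul_sub_eq_iff_of_resolvent_smul (by norm_num) (resProd_eq_iff hJ) hJhalf]

/-- `Fix (J_A R) = Fix (J_{(1/2)A} ∘ (Id + R)/2)`: `x = J_A (R x)` iff
`x = J_{(1/2)A} ((x + R x)/2)`, where `J_{(1/2)A}` is the resolvent of `(1/2) A`. -/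
theorem fix_resolvent_shift_eq_fix_half
    (A : Fin m → X → Set X) (J : Fin m → X → X) (Jhalf : (Fin m → X) → (Fin m → X))
    (hA : ∀ i, SVMaxMonotone (A i)) (hJ : ∀ i, IsResolventOf (J i) (A i))
    (hJhalf : ∀ x y : Fin m → X,
      Jhalf y = x ↔ y - x ∈ (2 : ℝ)⁻¹ • prodOp A x) :
    {x : Fin m → X | resProd J (shiftR x) = x} =
      {x : Fin m → X | Jhalf ((2 : ℝ)⁻¹ • (x + shiftR x)) = x} :=
  fix_resolvent_shift_eq_fix_half_general A J Jhalf hJ hJhalf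
end
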